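/- arXiv:1705.07944 — 3 statements merged into one kernel-verified Lean document; each statement's English description precedes it below -/
import Mathlib

section
/- Let G be a finite graph and let σ be a proper coloring of G using only colors from a set A, and let τ be a proper coloring using only colors from a set B, with A and B disjoint. Then σ and τ are connected in the recoloring graph H_q (q = |A| + |B|): one can transform σ into τ by recoloring vertices one at a time, always maintaining a proper coloring, by processing the color classes of τ one class at a time. -/
/-- A coloring `c` of the vertices of `G` is proper if adjacent vertices get distinct colors. -/
def IsProperColoring {V α : Type} (G : SimpleGraph V) (c : V → α) : Prop :=
  ∀ u v : V, G.Adj u v → c u ≠ c v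

/-- The recoloring graph on the proper colorings of `G` using colors from the palette `P`:
two colorings are adjacent iff they differ at exactly one vertex. -/
def RecolorGraphOn {V : Type} [Fintype V] (G : SimpleGraph V) (P : Finset ℕ) :
    SimpleGraph {c : V → ℕ // (∀ v, c v ∈ P) ∧ IsProperColoring G c} where
  Adj σ τ := (Finset.univ.filter fun v => σ.1 v ≠ τ.1 v).card = 1
  symm := by
    constructor
    intro σ τ h
    rw [Finset.filter_congr (fun v _ => ne_comm (a := τ.1 v) (b := σ.1 v))]
    exact h
  loopless := by constructor; intro σ h; simp at h

/-!
Recolor the vertices one at a time from their `σ`-color to their `τ`-color, in any order.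
Every intermediate coloring agrees with `τ` on the vertices already treated and with `σ`
elsewhere; it is proper because an `A`-color never equals a `B`-color, and consecutive
colorings differ at most at the vertex just treated.
-/

theorem IsProperColoring.piecewise {V α : Type} {G : SimpleGraph V} {σ τ : V → α}
    (hσ : IsProperColoring G σ) (hτ : IsProperColoring G τ) (hστ : ∀ u v, σ u ≠ τ v)
    (S : Finset V) [∀ v, Decidable (v ∈ S)] : IsProperColoring G (S.piecewise τ σ) := by
  intro u v huv
  by_cases hu : u ∈ S <;> by_cases hv : v ∈ S <;>
    simp only [Finset.piecewise_eq_of_mem, Finset.piecewise_eq_of_notMem, hu, hv,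
      not_false_eq_true]
  · exact hτ u v huv
  · exact (hστ v u).symm
  · exact hστ u v
  · exact hσ u v huv

namespace RecolorGraphOn

variable {V : Type} [Fintype V] [DecidableEq V] {G : SimpleGraph V} {P : Finset ℕ}

theorem reachable_of_eq_update
    {c d : {c : V → ℕ // (∀ v, c v ∈ P) ∧ IsProperColoring G c}} {a : V} {x : ℕ}
    (hd : d.1 = Function.update c.1 a x) : (RecolorGraphOn G P).Reachable c d := by
  by_cases hx : c.1 a = x
  · have : c = d := Subtype.ext (by rw [hd, ← hx, Function.update_eq_self])
    exact this ▸ SimpleGraph.Reachable.refl c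
  · apply SimpleGraph.Adj.reachable
    show (Finset.univ.filter fun v => c.1 v ≠ d.1 v).card = 1
    have hdiff : (Finset.univ.filter fun v => c.1 v ≠ d.1 v) = {a} := by
      ext v
      by_cases hv : v = a
      · simp [hd, hv, hx]
      · simp [hd, hv]
    rw [hdiff, Finset.card_singleton]

theorem reachable_of_forall_piecewise_mem
    {σ τ : {c : V → ℕ // (∀ v, c v ∈ P) ∧ IsProperColoring G c}}
    (hmix : ∀ S : Finset V,
      (∀ v, S.piecewise τ.1 σ.1 v ∈ P) ∧ IsProperColoring G (S.piecewise τ.1 σ.1)) :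
    (RecolorGraphOn G P).Reachable σ τ := by
  let mix (S : Finset V) : {c : V → ℕ // (∀ v, c v ∈ P) ∧ IsProperColoring G c} :=
    ⟨S.piecewise τ.1 σ.1, hmix S⟩
  have hreach (S : Finset V) : (RecolorGraphOn G P).Reachable σ (mix S) := by
    induction S using Finset.induction_on with
    | empty =>
      have : σ = mix ∅ := Subtype.ext (Finset.piecewise_empty τ.1 σ.1).symm
      exact this ▸ SimpleGraph.Reachable.refl σ
    | @insert a S _ ih => exact ih.trans (reachable_of_eq_update (Finset.piecewise_insert _ _ _ _))
  have hτ : mix Finset.univ = τ := Subtype.ext (Finset.piecewise_univ _ _)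
  exact hτ ▸ hreach Finset.univ

end RecolorGraphOn

/-- If `σ` is a proper coloring of `G` using only colors from `A` and `τ` is a proper
coloring using only colors from `B`, with `A` and `B` disjoint, then `σ` and `τ` are
connected in the recoloring graph on the palette `A ∪ B`. -/
theorem disjoint_palette_colorings_connected {V : Type} [Fintype V] [DecidableEq V]
    (G : SimpleGraph V) (A B : Finset ℕ) (hAB : Disjoint A B)
    (σ τ : {c : V → ℕ // (∀ v, c v ∈ A ∪ B) ∧ IsProperColoring G c})
    (hσ : ∀ v, σ.1 v ∈ A) (hτ : ∀ v, τ.1 v ∈ B) :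
    (RecolorGraphOn G (A ∪ B)).Reachable σ τ := by
  have hστ : ∀ u v, σ.1 u ≠ τ.1 v := fun u v h =>
    Finset.disjoint_left.mp hAB (hσ u) (h ▸ hτ v)
  refine RecolorGraphOn.reachable_of_forall_piecewise_mem fun S => ⟨fun v => ?_, ?_⟩
  · exact S.piecewise_cases τ.1 σ.1 (· ∈ A ∪ B) (τ.2.1 v) (σ.2.1 v)
  · exact σ.2.2.piecewise τ.2.2 hστ S
end

section
/- Let G be a finite graph, let U ⊆ V(G), and suppose the subgraph of G induced on U is K-degenerate. Let σ be a proper coloring of G such that no vertex of U receives a color from a set B of K+1 fresh colors (colors not used by σ anywhere). Then there is a path in the recoloring graph from σ to a proper coloring τ that agrees with σ outside U and colors all of U with colors from B. -/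
/-- The recoloring graph: vertices are the proper colorings of `G`, adjacent iff they
differ at exactly one vertex. -/
def RecolorGraph {V α : Type} [Fintype V] [DecidableEq α] (G : SimpleGraph V) :
    SimpleGraph {c : V → α // IsProperColoring G c} where
  Adj σ τ := (Finset.univ.filter fun v => σ.1 v ≠ τ.1 v).card = 1
  symm := by
    constructor
    intro σ τ h
    rw [Finset.filter_congr (fun v _ => ne_comm (a := τ.1 v) (b := σ.1 v))]
    exact h
  loopless := by constructor; intro σ h; simp at h

/-! Remove a vertex `v` of `U` with fewer than `K` neighbours in `U`, recolour `U \ {v}` into `B`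
recursively, and then recolour `v`. Its neighbours in `U` occupy fewer than `K` of the `K + 1`
colours of `B` and its neighbours outside `U` still carry their colours from `σ`, which avoid
`B`, so some colour of `B` is free at `v`; as `v` still has its original colour, which lies outside `B`,
this last recolouring is an edge of the recoloring graph. -/

section Recoloring

variable {V α : Type} {G : SimpleGraph V}

theorem IsProperColoring.update [DecidableEq V] {c : V → α} (hc : IsProperColoring G c)
    {v : V} {a : α} (ha : ∀ w, G.Adj v w → c w ≠ a) :
    IsProperColoring G (Function.update c v a) := by
  intro x y hxy
  rcases eq_or_ne x v with rfl | hx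
  · rw [Function.update_self, Function.update_of_ne hxy.ne.symm]
    exact (ha y hxy).symm
  rcases eq_or_ne y v with rfl | hy
  · rw [Function.update_self, Function.update_of_ne hx]
    exact ha x hxy.symm
  rw [Function.update_of_ne hx, Function.update_of_ne hy]
  exact hc x y hxy

variable [Fintype V] [DecidableEq V] [DecidableEq α]

theorem RecolorGraph.adj_update (c : {c : V → α // IsProperColoring G c}) {v : V} {a : α}
    (hva : c.1 v ≠ a) (h : IsProperColoring G (Function.update c.1 v a)) :
    (RecolorGraph G).Adj c ⟨_, h⟩ := by
  show (Finset.univ.filter fun w => c.1 w ≠ Function.update c.1 v a w).card = 1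
  rw [Finset.card_eq_one]
  refine ⟨v, Finset.eq_singleton_iff_unique_mem.2 ⟨by simpa using hva, fun w hw => ?_⟩⟩
  by_contra hwv
  simp [Function.update_of_ne hwv] at hw

theorem RecolorGraph.exists_adj_update_mem [DecidableRel G.Adj]
    (c : {c : V → α // IsProperColoring G c}) {v : V} {U : Finset V} {B : Finset α}
    (hU : (U.filter (G.Adj v)).card < B.card) (hout : ∀ w ∉ U, c.1 w ∉ B) (hv : c.1 v ∉ B) :
    ∃ b ∈ B, ∃ h : IsProperColoring G (Function.update c.1 v b),
      (RecolorGraph G).Adj c ⟨_, h⟩ := by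
  obtain ⟨b, hbB, hbU⟩ : ∃ b ∈ B, b ∉ (U.filter (G.Adj v)).image c.1 :=
    Finset.exists_mem_notMem_of_card_lt_card (Finset.card_image_le.trans_lt hU)
  have hfree : ∀ w, G.Adj v w → c.1 w ≠ b := by
    rintro w hvw rfl
    by_cases hwU : w ∈ U
    · exact hbU (Finset.mem_image_of_mem _ (Finset.mem_filter.2 ⟨hwU, hvw⟩))
    · exact hout w hwU hbB
  exact ⟨b, hbB, c.2.update hfree, adj_update c (fun h => hv (h ▸ hbB)) _⟩

end Recoloring

/-- If the subgraph of `G` induced on `U` is `K`-degenerate (every nonempty subset of `U`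
has a vertex with fewer than `K` neighbors inside it), `σ` is a proper coloring, and `B`
is a set of `K + 1` fresh colors not used anywhere by `σ`, then there is a path in the
recoloring graph from `σ` to a proper coloring agreeing with `σ` off `U` and coloring all
of `U` with colors from `B`. -/
theorem recolor_degenerate_subset {V : Type} [Fintype V] [DecidableEq V]
    (G : SimpleGraph V) [DecidableRel G.Adj] (U : Finset V) (K : ℕ)
    (hdeg : ∀ S : Finset V, S ⊆ U → S.Nonempty →
      ∃ v ∈ S, (S.filter (G.Adj v)).card < K)
    (σ : {c : V → ℕ // IsProperColoring G c}) (B : Finset ℕ) (hB : B.card = K + 1)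
    (hfresh : ∀ v : V, σ.1 v ∉ B) :
    ∃ τ : {c : V → ℕ // IsProperColoring G c},
      (RecolorGraph G).Reachable σ τ ∧
      (∀ v : V, v ∉ U → τ.1 v = σ.1 v) ∧
      (∀ v ∈ U, τ.1 v ∈ B) := by
  induction U using Finset.strongInduction with
  | _ U ih =>
    rcases U.eq_empty_or_nonempty with rfl | hne
    · exact ⟨σ, .refl σ, fun _ _ => rfl, by simp⟩
    obtain ⟨v, hvU, hvdeg⟩ := hdeg U subset_rfl hne
    obtain ⟨τ, hστ, hτ_off, hτ_in⟩ := ih (U.erase v) (Finset.erase_ssubset hvU)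
      fun S hS => hdeg S (hS.trans (U.erase_subset v))
    have hτ_out : ∀ w ∉ U, τ.1 w ∉ B := fun w hw =>
      hτ_off w (fun h => hw (Finset.mem_of_mem_erase h)) ▸ hfresh w
    obtain ⟨b, hbB, hprop, hadj⟩ := RecolorGraph.exists_adj_update_mem τ (by omega) hτ_out
      (hτ_off v (U.notMem_erase v) ▸ hfresh v)
    refine ⟨⟨_, hprop⟩, hστ.trans hadj.reachable, fun w hw => ?_, fun w hw => ?_⟩
    · exact (Function.update_of_ne (ne_of_mem_of_not_mem hvU hw).symm _ _).trans
        (hτ_off w (fun h => hw (Finset.mem_of_mem_erase h)))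
    · rcases eq_or_ne w v with rfl | hwv
      · simpa using hbB
      · simpa [Function.update_of_ne hwv] using hτ_in w (Finset.mem_erase.2 ⟨hwv, hw⟩)
end

section
/- In the Erdős–Rényi random graph G(n,p) with p = Δ/n for a sufficiently large constant Δ, with probability 1 - o(n^{-1/2}) every vertex subset S with |S| ≤ n/(log Δ)^2 spans at most |S|·Δ/(log Δ)^2 edges. -/
/-!
Union bound over the sets `S` with `s = |S| ≤ n / t`, where `t = (log Δ)²` and `a = Δ / t`.
The edges inside `S` are at most `s² / 2` independent Bernoulli(`Δ / n`) variables, so the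
exponential Markov inequality with base `θ = 2n / (s t) ≥ 2` bounds the probability of more than
`s a` of them by `exp (s a (1 - 1 / θ)) / θ ^ (s a)`. Together with `C(n, s) ≤ (e n / s) ^ s`
this is at most `1 / (n² C(n, s))` once `a ≥ 60 (1 + log t)`, which holds for large `Δ`, and
summing over all `S` gives `(n + 1) / n² = o(n^{-1/2})`.
-/

open MeasureTheory

/-- The binomial random graph `G(n,p)`, encoded as the product Bernoulli measure on the
indicators of the potential edges. -/
noncomputable def gnp (n : ℕ) (p : ENNReal) (hp : p ≤ 1) :
    Measure ({e : Fin n × Fin n // e.1 < e.2} → Bool) :=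
  Measure.pi fun _ => (PMF.bernoulli p.toNNReal (by simpa using ENNReal.toNNReal_mono ENNReal.one_ne_top hp)).toMeasure

/-- The number of edges of the sample `ω` spanned by the vertex set `S`. -/
def edgesIn {n : ℕ} (ω : {e : Fin n × Fin n // e.1 < e.2} → Bool)
    (S : Finset (Fin n)) : ℕ :=
  (Finset.univ.filter fun e : {e : Fin n × Fin n // e.1 < e.2} =>
    e.1.1 ∈ S ∧ e.1.2 ∈ S ∧ ω e = true).card


open Finset Real Filter Asymptotics
open scoped NNReal

noncomputable abbrev bernoulliPi (ι : Type*) [Fintype ι] (q : ℝ≥0) (hq : q ≤ 1) :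
    Measure (ι → Bool) :=
  Measure.pi fun _ => (PMF.bernoulli q hq).toMeasure

section BernoulliProduct

variable {ι : Type*} [Fintype ι] (q : ℝ≥0) (hq : q ≤ 1)

theorem integral_bernoulli_toMeasure (f : Bool → ℝ) :
    ∫ b, f b ∂(PMF.bernoulli q hq).toMeasure = (1 - q) * f false + q * f true := by
  simp [PMF.integral_eq_sum, PMF.bernoulli_apply, NNReal.coe_sub hq, add_comm]

theorem integral_bernoulliPi_pow_card_filter (F : Finset ι) (θ : ℝ) :
    ∫ ω, θ ^ #{e ∈ F | ω e = true} ∂bernoulliPi ι q hq = (1 - q + q * θ) ^ #F := by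
  classical
  let f (e : ι) (b : Bool) : ℝ := if e ∈ F then (if b = true then θ else 1) else 1
  have hprod (ω : ι → Bool) : θ ^ #{e ∈ F | ω e = true} = ∏ e, f e (ω e) := by
    rw [Finset.prod_ite_mem, univ_inter, ← Finset.prod_filter, prod_const]
  have hf (e : ι) : ∫ b, f e b ∂(PMF.bernoulli q hq).toMeasure
      = if e ∈ F then 1 - q + q * θ else 1 := by
    rw [integral_bernoulli_toMeasure]
    split_ifs <;> simp [f, *]
  simp_rw [hprod, integral_fintype_prod_eq_prod, hf, Finset.prod_ite_mem, univ_inter, prod_const]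

theorem bernoulliPi_real_le_card_filter_le (F : Finset ι) (x : ℝ) {θ : ℝ} (hθ : 1 ≤ θ) :
    (bernoulliPi ι q hq).real {ω | x ≤ #{e ∈ F | ω e = true}}
      ≤ exp (q * #F * (θ - 1)) / θ ^ x := by
  have hθ0 : 0 < θ := by linarith
  have hmarkov := mul_meas_ge_le_integral_of_nonneg (μ := bernoulliPi ι q hq)
    (.of_forall fun ω => pow_nonneg hθ0.le #{e ∈ F | ω e = true}) .of_finite (θ ^ x)
  rw [integral_bernoulliPi_pow_card_filter] at hmarkov
  have hmgf : (1 - q + q * θ) ^ #F ≤ exp (q * #F * (θ - 1)) := by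
    calc (1 - q + q * θ) ^ #F ≤ exp (q * (θ - 1)) ^ #F := by
          gcongr
          · nlinarith [q.2, show (q : ℝ) ≤ 1 from hq]
          · linarith [add_one_le_exp (q * (θ - 1))]
      _ = exp (q * #F * (θ - 1)) := by rw [← exp_nat_mul]; ring_nf
  rw [le_div_iff₀' (rpow_pos_of_pos hθ0 x)]
  refine le_trans ?_ (hmarkov.trans hmgf)
  refine mul_le_mul_of_nonneg_left (measureReal_mono fun ω hω => ?_) (by positivity)
  rw [Set.mem_setOf_eq, ← rpow_natCast]
  exact rpow_le_rpow_of_exponent_le hθ hω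

end BernoulliProduct

instance isProbabilityMeasure_gnp {n : ℕ} {p : ENNReal} (hp : p ≤ 1) :
    IsProbabilityMeasure (gnp n p hp) := by
  unfold gnp; infer_instance

def spannedPairs {n : ℕ} (S : Finset (Fin n)) : Finset {e : Fin n × Fin n // e.1 < e.2} :=
  {e | e.1.1 ∈ S ∧ e.1.2 ∈ S}

theorem card_spannedPairs_le {n : ℕ} (S : Finset (Fin n)) :
    #(spannedPairs S) ≤ (#S).choose 2 := by
  rw [← Sym2.card_image_offDiag]
  refine card_le_card_of_injOn (fun e => Sym2.mk.uncurry e.1) (fun e he => ?_)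
    (fun e _ e' _ h => ?_)
  · simp only [spannedPairs, coe_filter, mem_univ, true_and, Set.mem_setOf_eq] at he
    simp only [coe_image, Set.mem_image, mem_coe, mem_offDiag]
    exact ⟨e.1, ⟨he.1, he.2, e.2.ne⟩, rfl⟩
  · obtain ⟨⟨a, b⟩, hab⟩ := e
    obtain ⟨⟨c, d⟩, hcd⟩ := e'
    simp only [Function.uncurry_apply_pair, Sym2.eq_iff] at h
    rcases h with ⟨rfl, rfl⟩ | ⟨rfl, rfl⟩
    · rfl
    · exact absurd (hab.trans hcd) (lt_irrefl _)

theorem edgesIn_eq_card_filter {n : ℕ} (ω : {e : Fin n × Fin n // e.1 < e.2} → Bool)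
    (S : Finset (Fin n)) : edgesIn ω S = #{e ∈ spannedPairs S | ω e = true} := by
  simp [edgesIn, spannedPairs, filter_filter, and_assoc]

theorem choose_le_exp_one_mul_div_pow (n s : ℕ) : (n.choose s : ℝ) ≤ (exp 1 * n / s) ^ s := by
  rcases s.eq_zero_or_pos with rfl | hs
  · simp
  have hs' : (0 : ℝ) < s := by exact_mod_cast hs
  have hfact : (s : ℝ) ^ s / s.factorial ≤ exp 1 ^ s := by
    rw [← exp_nat_mul, mul_one]; exact pow_div_factorial_le_exp _ hs'.le s
  calc (n.choose s : ℝ) ≤ n ^ s / s.factorial := Nat.choose_le_pow_div s n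
    _ = (n / s) ^ s * ((s : ℝ) ^ s / s.factorial) := by
        rw [div_pow]; field_simp
    _ ≤ (n / s) ^ s * exp 1 ^ s := by gcongr
    _ = (exp 1 * n / s) ^ s := by rw [← mul_pow]; ring

theorem union_bound_exponent_le {t a s u : ℝ} (ht : 1 ≤ t) (ha : 60 * (1 + log t) ≤ a)
    (hs : 1 ≤ s) (hu : 1 ≤ u) :
    s * (1 + log (t * u)) + s * a * (1 - (2 * u)⁻¹) - s * a * log (2 * u)
      ≤ -2 * log (s * t * u) := by
  have hu0 : 0 < u := by linarith
  have hlt : 0 ≤ log t := log_nonneg ht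
  have hlu : 0 ≤ log u := log_nonneg hu
  have ha60 : 60 * (1 + log t) * s ≤ a * s := by gcongr
  have hinv : 1 - log u ≤ u⁻¹ := by linarith [one_sub_inv_le_log_of_pos hu0]
  have hsa : 0 ≤ s * a := by nlinarith
  have h1 : s * a * (1 - (2 * u)⁻¹) ≤ s * a * (1 / 2 + log u / 2) := by
    rw [mul_inv, show (2 : ℝ)⁻¹ = 1 / 2 by norm_num]
    gcongr
    linarith
  rw [log_mul (by positivity) hu0.ne', log_mul (by norm_num) hu0.ne',
    log_mul (by positivity) hu0.ne', log_mul (by positivity) (by positivity)]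
  -- Since `log 2 > 2 / 3`, the `a`-terms contribute at most `-s a (1 / 6 + log u / 2)`, which
  -- beats the rest because `a ≥ 60 (1 + log t)`.
  nlinarith [log_le_sub_one_of_pos (by linarith : 0 < s), log_two_gt_d9,
    mul_nonneg hsa hlu, mul_nonneg (by linarith : 0 ≤ s - 1) hlt, mul_nonneg hlt hlu]

theorem gnp_real_le_edgesIn_le {n : ℕ} {p : ENNReal} (hp : p ≤ 1) (S : Finset (Fin n)) (x : ℝ)
    {θ : ℝ} (hθ : 1 ≤ θ) :
    (gnp n p hp).real {ω | x ≤ edgesIn ω S}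
      ≤ exp (p.toReal * (#S ^ 2 / 2) * (θ - 1)) / θ ^ x := by
  simp_rw [edgesIn_eq_card_filter]
  refine (bernoulliPi_real_le_card_filter_le _ _ _ x hθ).trans ?_
  have hcard : (#(spannedPairs S) : ℝ) ≤ #S ^ 2 / 2 := by
    calc (#(spannedPairs S) : ℝ) ≤ (#S).choose 2 := by exact_mod_cast card_spannedPairs_le S
      _ = #S * (#S - 1) / 2 := Nat.cast_choose_two ℝ _
      _ ≤ #S ^ 2 / 2 := by linarith [(#S).cast_nonneg (α := ℝ)]
  gcongr
  exact le_of_eq (ENNReal.coe_toNNReal_eq_toReal p)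

theorem choose_mul_gnp_real_lt_edgesIn_le {n : ℕ} {Δ t : ℝ} (ht : 1 ≤ t)
    (hΔ : 60 * (1 + log t) ≤ Δ / t) {p : ENNReal} (hp : p ≤ 1) (hpΔ : p.toReal ≤ Δ / n)
    {S : Finset (Fin n)} (hS : (#S : ℝ) ≤ n / t) :
    n.choose #S * (gnp n p hp).real {ω | (#S : ℝ) * Δ / t < edgesIn ω S}
      ≤ ((n : ℝ) ^ 2)⁻¹ := by
  rcases S.eq_empty_or_nonempty with rfl | hne
  · simp [edgesIn]
  set s : ℝ := ((#S : ℕ) : ℝ) with hs_def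
  set a := Δ / t with ha_def
  have hs : 1 ≤ s := Nat.one_le_cast.mpr hne.card_pos
  have ht0 : 0 < t := by linarith
  set u := n / (s * t)
  have hu : 1 ≤ u := by rwa [le_div_iff₀ (by positivity), one_mul, ← le_div_iff₀ ht0]
  have hn : (n : ℝ) = s * t * u := (mul_div_cancel₀ _ (by positivity)).symm
  have hx : s * Δ / t = s * a := mul_div_assoc _ _ _
  clear_value s a u
  have hprob : (gnp n p hp).real {ω | s * Δ / t < edgesIn ω S}
      ≤ exp (s * a * (1 - (2 * u)⁻¹)) / (2 * u) ^ (s * a) := by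
    have hsub :
        {ω | s * Δ / t < (edgesIn ω S : ℝ)} ⊆ {ω | s * a ≤ (edgesIn ω S : ℝ)} :=
      fun ω hω => (hx ▸ hω : s * a < _).le
    refine (measureReal_mono hsub (measure_ne_top _ _)).trans ?_
    refine (gnp_real_le_edgesIn_le hp S _ (θ := 2 * u) (by linarith)).trans ?_
    rw [← hs_def]
    refine div_le_div_of_nonneg_right (exp_le_exp.mpr ?_) (by positivity)
    calc p.toReal * (s ^ 2 / 2) * (2 * u - 1) ≤ Δ / n * (s ^ 2 / 2) * (2 * u - 1) := by
          gcongr; linarith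
      _ = s * a * (1 - (2 * u)⁻¹) := by
          rw [hn, ha_def]; field_simp
  have hchoose : (n.choose #S : ℝ) ≤ exp (s * (1 + log (t * u))) := by
    refine (choose_le_exp_one_mul_div_pow n #S).trans (le_of_eq ?_)
    rw [hs_def, exp_nat_mul, exp_add, exp_log (by positivity), hn, hs_def]
    field_simp
  have hn0 : (0 : ℝ) < n := by rw [hn]; positivity
  calc n.choose #S * (gnp n p hp).real {ω | s * Δ / t < edgesIn ω S}
      ≤ exp (s * (1 + log (t * u))) * (exp (s * a * (1 - (2 * u)⁻¹)) / (2 * u) ^ (s * a)) :=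
        mul_le_mul hchoose hprob measureReal_nonneg (exp_pos _).le
    _ = exp (s * (1 + log (t * u)) + s * a * (1 - (2 * u)⁻¹) - s * a * log (2 * u)) := by
        rw [rpow_def_of_pos (by positivity), mul_comm (log _), exp_sub, exp_add,
          mul_div_assoc]
    _ ≤ exp (-2 * log (s * t * u)) := exp_le_exp.mpr (union_bound_exponent_le ht hΔ hs hu)
    _ = ((n : ℝ) ^ 2)⁻¹ := by
        rw [← hn, neg_mul, exp_neg, ← log_rpow hn0, exp_log (by positivity), rpow_two]

theorem sum_inv_choose_card (α : Type*) [Fintype α] :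
    ∑ S : Finset α, ((Fintype.card α).choose #S : ℝ)⁻¹ = Fintype.card α + 1 := by
  rw [← powerset_univ, sum_powerset_apply_card (fun m => ((Fintype.card α).choose m : ℝ)⁻¹),
    card_univ]
  have hterm (m : ℕ) (hm : m ∈ range (Fintype.card α + 1)) :
      (Fintype.card α).choose m • ((Fintype.card α).choose m : ℝ)⁻¹ = 1 := by
    rw [nsmul_eq_mul, mul_inv_cancel₀]
    exact_mod_cast (Nat.choose_pos (Nat.lt_succ_iff.mp (mem_range.mp hm))).ne'
  rw [sum_congr rfl hterm]
  simp

theorem gnp_real_not_sparse_le {n : ℕ} {Δ t : ℝ} (ht : 1 ≤ t)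
    (hΔ : 60 * (1 + log t) ≤ Δ / t) {p : ENNReal} (hp : p ≤ 1) (hpΔ : p.toReal ≤ Δ / n) :
    (gnp n p hp).real {ω | ¬ ∀ S : Finset (Fin n), (#S : ℝ) ≤ n / t →
      (edgesIn ω S : ℝ) ≤ #S * Δ / t} ≤ (n + 1) / n ^ 2 := by
  let sparse : Finset (Finset (Fin n)) := {S | (#S : ℝ) ≤ n / t}
  have hsub : {ω | ¬ ∀ S : Finset (Fin n), (#S : ℝ) ≤ n / t →
        (edgesIn ω S : ℝ) ≤ #S * Δ / t}
      ⊆ ⋃ S ∈ sparse, {ω | (#S : ℝ) * Δ / t < edgesIn ω S} := by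
    intro ω hω
    push Not at hω
    obtain ⟨S, hS, hlt⟩ := hω
    exact Set.mem_biUnion (by simpa [sparse] using hS) hlt
  have hbound (S : Finset (Fin n)) (hS : S ∈ sparse) :
      (gnp n p hp).real {ω | (#S : ℝ) * Δ / t < edgesIn ω S}
        ≤ ((n : ℝ) ^ 2 * n.choose #S)⁻¹ := by
    have hchoose : (0 : ℝ) < n.choose #S := by
      exact_mod_cast Nat.choose_pos (by simpa using card_le_univ S)
    rw [mul_inv, ← div_eq_mul_inv, le_div_iff₀' hchoose]
    exact choose_mul_gnp_real_lt_edgesIn_le ht hΔ hp hpΔ (by simpa [sparse] using hS)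
  calc (gnp n p hp).real _
      ≤ ∑ S ∈ sparse, (gnp n p hp).real {ω | (#S : ℝ) * Δ / t < edgesIn ω S} :=
        (measureReal_mono hsub (measure_ne_top _ _)).trans (measureReal_biUnion_finset_le _ _)
    _ ≤ ∑ S ∈ sparse, ((n : ℝ) ^ 2 * n.choose #S)⁻¹ := sum_le_sum hbound
    _ ≤ ∑ S : Finset (Fin n), ((n : ℝ) ^ 2 * n.choose #S)⁻¹ :=
        sum_le_sum_of_subset_of_nonneg (subset_univ _) fun _ _ _ => by positivity
    _ = (n + 1) / n ^ 2 := by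
        have hsum := sum_inv_choose_card (Fin n)
        rw [Fintype.card_fin] at hsum
        simp_rw [mul_inv, ← mul_sum, hsum]
        ring

theorem eventually_sq_log_threshold :
    ∀ᶠ Δ in atTop,
      1 ≤ (log Δ) ^ 2 ∧ 60 * (1 + log ((log Δ) ^ 2)) ≤ Δ / (log Δ) ^ 2 := by
  filter_upwards [tendsto_log_atTop.eventually_ge_atTop 1,
    (isLittleO_pow_log_id_atTop (n := 4)).bound (by norm_num : (0 : ℝ) < 1 / 120),
    eventually_ge_atTop 0] with Δ hl hlog hΔ
  have ht : 1 ≤ (log Δ) ^ 2 := one_le_pow₀ hl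
  rw [norm_of_nonneg (by positivity), id, norm_of_nonneg hΔ] at hlog
  refine ⟨ht, ?_⟩
  rw [le_div_iff₀ (by positivity)]
  nlinarith [log_le_sub_one_of_pos (by positivity : 0 < (log Δ) ^ 2)]

theorem isLittleO_succ_div_sq_rpow :
    (fun n : ℕ => ((n : ℝ) + 1) / n ^ 2)
      =o[atTop] fun n : ℕ => (n : ℝ) ^ (-(1 : ℝ) / 2) := by
  set g : ℕ → ℝ := fun n => (n : ℝ) ^ (-(1 : ℝ) / 2)
  have hg : Tendsto g atTop (nhds 0) := by
    have := (tendsto_rpow_neg_atTop (by norm_num : (0 : ℝ) < 1 / 2)).comp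
      tendsto_natCast_atTop_atTop
    rwa [← neg_div] at this
  have hgg : (fun n => g n * g n) =o[atTop] g := by
    simpa using (isBigO_refl g atTop).mul_isLittleO ((isLittleO_one_iff ℝ).mpr hg)
  refine IsBigO.trans_isLittleO (IsBigO.of_bound 2 ?_) hgg
  filter_upwards [eventually_ge_atTop 1] with n hn
  have hn' : (1 : ℝ) ≤ n := by exact_mod_cast hn
  have hgn : g n * g n = (n : ℝ)⁻¹ := by
    rw [← rpow_add (by positivity), ← rpow_neg_one]; norm_num
  rw [hgn, norm_of_nonneg (by positivity), norm_of_nonneg (by positivity),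
    div_le_iff₀ (by positivity)]
  field_simp
  nlinarith

/-- In `G(n,p)` with `p = Δ/n` for a sufficiently large constant `Δ`, with probability
`1 - o(n^{-1/2})` every vertex subset `S` with `|S| ≤ n / (log Δ)²` spans at most
`|S| · Δ / (log Δ)²` edges. -/
theorem gnp_sparse_subsets :
    ∃ Δ₀ : ℝ, ∀ Δ : ℝ, Δ₀ ≤ Δ →
      (fun n : ℕ =>
          ((gnp n (min 1 (ENNReal.ofReal (Δ / n))) (min_le_left _ _))
            {ω | ¬ ∀ S : Finset (Fin n), (S.card : ℝ) ≤ (n : ℝ) / (Real.log Δ)^2 →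
              ((edgesIn ω S : ℝ) ≤ (S.card : ℝ) * Δ / (Real.log Δ)^2)}).toReal)
        =o[Filter.atTop] fun n : ℕ => (n : ℝ) ^ (-(1 : ℝ)/2) := by
  obtain ⟨Δ₀, hΔ₀⟩ := eventually_atTop.mp eventually_sq_log_threshold
  refine ⟨Δ₀, fun Δ hΔ => ?_⟩
  obtain ⟨ht, hΔt⟩ := hΔ₀ Δ hΔ
  have hΔ0 : 0 ≤ Δ :=
    ((div_pos_iff_of_pos_right (by linarith : (0 : ℝ) < log Δ ^ 2)).mp
      (by linarith [log_nonneg ht])).le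
  refine (IsBigO.of_bound 1 (Eventually.of_forall fun n => ?_)).trans_isLittleO
    isLittleO_succ_div_sq_rpow
  have hp : (min 1 (ENNReal.ofReal (Δ / n))).toReal ≤ Δ / n :=
    (ENNReal.toReal_mono ENNReal.ofReal_ne_top (min_le_right _ _)).trans
      (ENNReal.toReal_ofReal (by positivity)).le
  rw [one_mul, norm_of_nonneg ENNReal.toReal_nonneg, norm_of_nonneg (by positivity)]
  exact gnp_real_not_sparse_le ht hΔt _ hp
end
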